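/- Define T[W] = ‖√W Q⁻¹ U Q⁻¹ √W‖₁ / Tr[W Q⁻¹] and R = ‖Q^{-1/2} U Q^{-1/2}‖_∞ for positive definite W, Q and real antisymmetric U. Then 0 ≤ T[W] ≤ R. -/

import Mathlib

open Matrix

/-- the positive semidefinite square root as Mathlib (Dec 2024) defined `Matrix.PosSemidef.sqrt` -/
noncomputable def psdSqrt {n : ℕ} {A : Matrix (Fin n) (Fin n) ℝ} (hA : A.PosSemidef) :
    Matrix (Fin n) (Fin n) ℝ :=
  hA.1.eigenvectorUnitary.1 * diagonal ((↑) ∘ (√·) ∘ hA.1.eigenvalues) *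
    (star hA.1.eigenvectorUnitary : Matrix (Fin n) (Fin n) ℝ)

theorem psdSqrt_isHermitian {n : ℕ} {A : Matrix (Fin n) (Fin n) ℝ} (hA : A.PosSemidef) :
    (psdSqrt hA).IsHermitian := by
  unfold psdSqrt
  have hD : (diagonal ((↑) ∘ (√·) ∘ hA.1.eigenvalues) : Matrix (Fin n) (Fin n) ℝ).IsHermitian := by
    simp [IsHermitian]
  set u := hA.1.eigenvectorUnitary
  change (u.1 * _ * star u.1).IsHermitian
  rw [IsHermitian, star_eq_conjTranspose, conjTranspose_mul, conjTranspose_mul,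
    conjTranspose_conjTranspose, hD.eq, Matrix.mul_assoc]

noncomputable def traceNorm {n : ℕ} (A : Matrix (Fin n) (Fin n) ℝ) : ℝ :=
  (psdSqrt (Matrix.posSemidef_conjTranspose_mul_self A)).trace

noncomputable def singVals {n : ℕ} (A : Matrix (Fin n) (Fin n) ℝ) : Fin n → ℝ :=
  (psdSqrt_isHermitian (Matrix.posSemidef_conjTranspose_mul_self A)).eigenvalues

noncomputable def opNorm {n : ℕ} (A : Matrix (Fin n) (Fin n) ℝ) : ℝ :=
  ⨆ i, singVals A i

/-- the positive semidefinite square root, extended by `0` off psd matrices -/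
noncomputable def mySqrt {n : ℕ} (A : Matrix (Fin n) (Fin n) ℝ) : Matrix (Fin n) (Fin n) ℝ :=
  open Classical in
  if h : A.PosSemidef then psdSqrt h else 0

/-- the weight-dependent incompatibility measure `T[W]` -/
noncomputable def Tmeas {n : ℕ} (W Q U : Matrix (Fin n) (Fin n) ℝ) : ℝ :=
  traceNorm (mySqrt W * Q⁻¹ * U * Q⁻¹ * mySqrt W) / (W * Q⁻¹).trace

/-- the quantumness measure `R` -/
noncomputable def Rmeas {n : ℕ} (Q U : Matrix (Fin n) (Fin n) ℝ) : ℝ :=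
  opNorm (mySqrt Q⁻¹ * U * mySqrt Q⁻¹)

/-! With `A = √W Q^{-1/2}` one has `√W Q⁻¹ U Q⁻¹ √W = A (Q^{-1/2} U Q^{-1/2}) Aᵀ` and
`Tr[W Q⁻¹] = Tr[A Aᵀ]`, so it suffices to show `‖A B Aᵀ‖₁ ≤ ‖B‖_∞ Tr[A Aᵀ]` for every `B`.
By the polar decomposition, `‖N‖₁ = Tr[Pᵀ N V]` with `V` orthogonal and `P` a partial
isometry, so `‖A B Aᵀ‖₁ = Tr[Y B Xᵀ]` with `Y = Pᵀ A`, `X = Vᵀ A`. Row by row, Cauchy–Schwarz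
and AM–GM give `2 Tr[Y B Xᵀ] ≤ ‖B‖_∞ (Tr[Y Yᵀ] + Tr[X Xᵀ])`, and both traces are at most
`Tr[A Aᵀ]` because `1 - P Pᵀ` is positive semidefinite and `V` is orthogonal. -/

section

variable {n : ℕ}

theorem psdSqrt_posSemidef {A : Matrix (Fin n) (Fin n) ℝ} (hA : A.PosSemidef) :
    (psdSqrt hA).PosSemidef := by
  have hD : (diagonal ((↑) ∘ (√·) ∘ hA.1.eigenvalues) : Matrix (Fin n) (Fin n) ℝ).PosSemidef :=
    PosSemidef.diagonal fun i => Real.sqrt_nonneg _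
  unfold psdSqrt
  rw [star_eq_conjTranspose]
  exact hD.mul_mul_conjTranspose_same _

theorem psdSqrt_mul_self {A : Matrix (Fin n) (Fin n) ℝ} (hA : A.PosSemidef) :
    psdSqrt hA * psdSqrt hA = A := by
  set u := hA.1.eigenvectorUnitary
  have hu : star u.1 * u.1 = 1 := Unitary.coe_star_mul_self u
  conv_rhs => rw [hA.1.spectral_theorem, Unitary.conjStarAlgAut_apply]
  calc psdSqrt hA * psdSqrt hA
      = u.1 * (diagonal ((↑) ∘ (√·) ∘ hA.1.eigenvalues) * (star u.1 * u.1) *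
          diagonal ((↑) ∘ (√·) ∘ hA.1.eigenvalues)) * star u.1 := by
        simp only [psdSqrt, Matrix.mul_assoc]; rfl
    _ = _ := by
        rw [hu, Matrix.mul_one, diagonal_mul_diagonal]
        congr 3
        funext i
        simp [Real.mul_self_sqrt (hA.eigenvalues_nonneg i)]

theorem Matrix.IsHermitian.exists_orthogonal_diagonalization {m : Type*} [Fintype m]
    [DecidableEq m] {A : Matrix m m ℝ} (hA : A.IsHermitian) :
    ∃ V : Matrix m m ℝ, Vᵀ * V = 1 ∧ V * Vᵀ = 1 ∧
      A = V * diagonal hA.eigenvalues * Vᵀ := by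
  refine ⟨hA.eigenvectorUnitary.1, Unitary.coe_star_mul_self hA.eigenvectorUnitary,
    Unitary.coe_mul_star_self hA.eigenvectorUnitary, ?_⟩
  conv_lhs => rw [hA.spectral_theorem, Unitary.conjStarAlgAut_apply]
  rfl

theorem exists_transpose_mul_self_eq_singVals (N : Matrix (Fin n) (Fin n) ℝ) :
    ∃ V : Matrix (Fin n) (Fin n) ℝ, Vᵀ * V = 1 ∧ V * Vᵀ = 1 ∧
      Nᵀ * N = V * diagonal (singVals N ^ 2) * Vᵀ := by
  have hNN := posSemidef_conjTranspose_mul_self N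
  obtain ⟨V, hVV, hVV', hsqrt⟩ :=
    IsHermitian.exists_orthogonal_diagonalization (psdSqrt_isHermitian hNN)
  refine ⟨V, hVV, hVV', ?_⟩
  calc Nᵀ * N = psdSqrt hNN * psdSqrt hNN := (psdSqrt_mul_self hNN).symm
    _ = V * (diagonal (singVals N) * (Vᵀ * V) * diagonal (singVals N)) * Vᵀ := by
        rw [hsqrt]; simp only [singVals, Matrix.mul_assoc]
    _ = V * diagonal (singVals N ^ 2) * Vᵀ := by
        rw [hVV, Matrix.mul_one, diagonal_mul_diagonal]
        congr
        ext i
        exact (sq _).symm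

theorem singVals_nonneg (N : Matrix (Fin n) (Fin n) ℝ) (i : Fin n) : 0 ≤ singVals N i :=
  (psdSqrt_posSemidef (posSemidef_conjTranspose_mul_self N)).eigenvalues_nonneg i

theorem singVals_le_opNorm (N : Matrix (Fin n) (Fin n) ℝ) (i : Fin n) : singVals N i ≤ opNorm N :=
  le_ciSup (Set.finite_range _).bddAbove i

theorem opNorm_nonneg (N : Matrix (Fin n) (Fin n) ℝ) : 0 ≤ opNorm N := by
  cases n with
  | zero => simp [opNorm]
  | succ k => exact (singVals_nonneg N 0).trans (singVals_le_opNorm N 0)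

theorem traceNorm_eq_sum_singVals (N : Matrix (Fin n) (Fin n) ℝ) :
    traceNorm N = ∑ i, singVals N i := by
  unfold traceNorm singVals
  simpa using IsHermitian.trace_eq_sum_eigenvalues (psdSqrt_isHermitian _)

theorem traceNorm_nonneg (N : Matrix (Fin n) (Fin n) ℝ) : 0 ≤ traceNorm N :=
  (psdSqrt_posSemidef (posSemidef_conjTranspose_mul_self N)).trace_nonneg

theorem posSemidef_opNorm_sq_smul_one_sub (B : Matrix (Fin n) (Fin n) ℝ) :
    (opNorm B ^ 2 • (1 : Matrix (Fin n) (Fin n) ℝ) - Bᵀ * B).PosSemidef := by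
  obtain ⟨V, -, hVV', hBB⟩ := exists_transpose_mul_self_eq_singVals B
  have hD : (diagonal fun i => opNorm B ^ 2 - singVals B i ^ 2).PosSemidef :=
    PosSemidef.diagonal fun i => sub_nonneg.2 <|
      pow_le_pow_left₀ (singVals_nonneg B i) (singVals_le_opNorm B i) 2
  convert hD.mul_mul_conjTranspose_same V using 1
  rw [hBB, conjTranspose_eq_transpose_of_trivial, ← diagonal_sub, ← smul_one_eq_diagonal,
    Matrix.mul_sub, Matrix.sub_mul, Matrix.mul_smul, Matrix.mul_one, Matrix.smul_mul, hVV']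
  rfl

theorem dotProduct_mulVec_self_le (B : Matrix (Fin n) (Fin n) ℝ) (x : Fin n → ℝ) :
    (B *ᵥ x) ⬝ᵥ (B *ᵥ x) ≤ opNorm B ^ 2 * (x ⬝ᵥ x) := by
  have hquad : x ⬝ᵥ ((Bᵀ * B) *ᵥ x) = (B *ᵥ x) ⬝ᵥ (B *ᵥ x) := by
    rw [← mulVec_mulVec, dotProduct_mulVec, vecMul_transpose]
  have h := (posSemidef_opNorm_sq_smul_one_sub B).dotProduct_mulVec_nonneg x
  rw [star_trivial, sub_mulVec, dotProduct_sub, hquad, smul_mulVec, one_mulVec,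
    dotProduct_smul, smul_eq_mul] at h
  linarith

theorem sq_dotProduct_le {m : Type*} [Fintype m] (x y : m → ℝ) :
    (x ⬝ᵥ y) ^ 2 ≤ (x ⬝ᵥ x) * (y ⬝ᵥ y) := by
  simpa only [dotProduct, sq] using Finset.sum_mul_sq_le_sq_mul_sq Finset.univ x y

theorem two_mul_dotProduct_mulVec_le (B : Matrix (Fin n) (Fin n) ℝ) (x y : Fin n → ℝ) :
    2 * (y ⬝ᵥ (B *ᵥ x)) ≤ opNorm B * (y ⬝ᵥ y + x ⬝ᵥ x) := by
  have hR := opNorm_nonneg B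
  have hx : 0 ≤ x ⬝ᵥ x := by simpa using dotProduct_self_star_nonneg x
  have hy : 0 ≤ y ⬝ᵥ y := by simpa using dotProduct_self_star_nonneg y
  have hBx := mul_le_mul_of_nonneg_left (dotProduct_mulVec_self_le B x) hy
  have hcs := sq_dotProduct_le y (B *ᵥ x)
  refine (abs_le_of_sq_le_sq' ?_ (by positivity)).2
  nlinarith [mul_nonneg (sq_nonneg (opNorm B)) (sq_nonneg (y ⬝ᵥ y - x ⬝ᵥ x))]

theorem trace_mul_transpose_eq_sum {m k R : Type*} [Fintype m] [Fintype k]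
    [NonUnitalNonAssocSemiring R] (X Y : Matrix m k R) :
    (X * Yᵀ).trace = ∑ i, X i ⬝ᵥ Y i := by
  simp only [trace, diag, mul_apply', transpose_apply]

theorem two_mul_trace_mul_mul_transpose_le (Y B X : Matrix (Fin n) (Fin n) ℝ) :
    2 * (Y * B * Xᵀ).trace ≤ opNorm B * ((Y * Yᵀ).trace + (X * Xᵀ).trace) := by
  have hrow : ∀ i, (X * Bᵀ) i = B *ᵥ X i := fun i => by
    ext k
    simp [mul_apply, mulVec, dotProduct, mul_comm]
  rw [Matrix.mul_assoc, ← transpose_transpose B, ← transpose_mul, transpose_transpose,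
    trace_mul_transpose_eq_sum, trace_mul_transpose_eq_sum, trace_mul_transpose_eq_sum,
    ← Finset.sum_add_distrib, Finset.mul_sum, Finset.mul_sum]
  exact Finset.sum_le_sum fun i _ => by
    rw [hrow]
    exact two_mul_dotProduct_mulVec_le B (X i) (Y i)

theorem posSemidef_one_sub_mul_transpose {m : Type*} [Fintype m] [DecidableEq m]
    {P : Matrix m m ℝ} (hP : P * (Pᵀ * P) = P) : (1 - P * Pᵀ).PosSemidef := by
  have hidem : P * Pᵀ * (P * Pᵀ) = P * Pᵀ := by
    rw [Matrix.mul_assoc, ← Matrix.mul_assoc Pᵀ, ← Matrix.mul_assoc, hP]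
  have hsq : (1 - P * Pᵀ)ᴴ * (1 - P * Pᵀ) = 1 - P * Pᵀ := by
    rw [conjTranspose_eq_transpose_of_trivial, transpose_sub, transpose_one, transpose_mul,
      transpose_transpose, Matrix.sub_mul, Matrix.mul_sub, Matrix.mul_sub, hidem]
    simp
  exact hsq ▸ posSemidef_conjTranspose_mul_self (1 - P * Pᵀ)

theorem trace_mul_transpose_le_of_posSemidef_one_sub {m : Type*} [Fintype m] [DecidableEq m]
    {P : Matrix m m ℝ} (hP : (1 - P * Pᵀ).PosSemidef) (A : Matrix m m ℝ) :
    (Pᵀ * A * (Pᵀ * A)ᵀ).trace ≤ (A * Aᵀ).trace := by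
  have h := (hP.conjTranspose_mul_mul_same A).trace_nonneg
  rw [conjTranspose_eq_transpose_of_trivial, Matrix.mul_sub, Matrix.sub_mul, trace_sub,
    Matrix.mul_one] at h
  rw [transpose_mul, transpose_transpose, trace_mul_comm, trace_mul_comm A]
  simpa only [Matrix.mul_assoc, sub_nonneg] using h

theorem exists_partialIsometry_traceNorm_eq (N : Matrix (Fin n) (Fin n) ℝ) :
    ∃ P V : Matrix (Fin n) (Fin n) ℝ, V * Vᵀ = 1 ∧ P * (Pᵀ * P) = P ∧
      traceNorm N = (Pᵀ * N * V).trace := by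
  obtain ⟨V, hVV, hVV', hNN⟩ := exists_transpose_mul_self_eq_singVals N
  set σ := singVals N
  have hC : (N * V)ᵀ * (N * V) = diagonal (σ ^ 2) := by
    rw [transpose_mul, Matrix.mul_assoc, ← Matrix.mul_assoc Nᵀ, hNN]
    simp only [Matrix.mul_assoc, hVV, Matrix.mul_one]
    rw [← Matrix.mul_assoc, hVV, Matrix.one_mul]
  -- `P = N V Σ⁺`: since `0⁻¹ = 0`, `σ⁻¹` is the pseudo-inverse of `Σ = diagonal σ`.
  refine ⟨N * V * diagonal σ⁻¹, V, hVV', ?_, ?_⟩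
  · have hPP : (N * V * diagonal σ⁻¹)ᵀ * (N * V * diagonal σ⁻¹) =
        diagonal σ⁻¹ * diagonal (σ ^ 2) * diagonal σ⁻¹ := by
      rw [transpose_mul, diagonal_transpose, ← hC]
      simp only [Matrix.mul_assoc]
    rw [hPP, diagonal_mul_diagonal, diagonal_mul_diagonal, Matrix.mul_assoc, diagonal_mul_diagonal]
    congr 2
    funext i
    rw [Pi.inv_apply, Pi.pow_apply]
    rcases eq_or_ne (σ i) 0 with h | h
    · simp [h]
    · field_simp
  · rw [transpose_mul, diagonal_transpose, Matrix.mul_assoc, Matrix.mul_assoc, hC,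
      diagonal_mul_diagonal, trace_diagonal, traceNorm_eq_sum_singVals]
    congr 1
    funext i
    rw [Pi.pow_apply, sq, ← mul_assoc, Pi.inv_apply, inv_mul_mul_self]

theorem traceNorm_mul_mul_transpose_le (A B : Matrix (Fin n) (Fin n) ℝ) :
    traceNorm (A * B * Aᵀ) ≤ opNorm B * (A * Aᵀ).trace := by
  obtain ⟨P, V, hVV', hP, htr⟩ := exists_partialIsometry_traceNorm_eq (A * B * Aᵀ)
  have hcs := two_mul_trace_mul_mul_transpose_le (Pᵀ * A) B (Vᵀ * A)
  have hY := trace_mul_transpose_le_of_posSemidef_one_sub (posSemidef_one_sub_mul_transpose hP) A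
  have hX : (Vᵀ * A * (Vᵀ * A)ᵀ).trace = (A * Aᵀ).trace := by
    rw [transpose_mul, transpose_transpose, trace_mul_comm, Matrix.mul_assoc,
      ← Matrix.mul_assoc V, hVV', Matrix.one_mul, trace_mul_comm]
  have hN : Pᵀ * A * B * (Vᵀ * A)ᵀ = Pᵀ * (A * B * Aᵀ) * V := by
    simp only [transpose_mul, transpose_transpose, Matrix.mul_assoc]
  rw [hN, ← htr, hX] at hcs
  nlinarith [opNorm_nonneg B]

theorem mySqrt_mul_self {A : Matrix (Fin n) (Fin n) ℝ} (hA : A.PosSemidef) :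
    mySqrt A * mySqrt A = A := by
  rw [mySqrt, dif_pos hA]
  exact psdSqrt_mul_self hA

theorem mySqrt_transpose {A : Matrix (Fin n) (Fin n) ℝ} (hA : A.PosSemidef) :
    (mySqrt A)ᵀ = mySqrt A := by
  rw [mySqrt, dif_pos hA]
  exact psdSqrt_isHermitian hA

end

theorem Tmeas_nonneg_le_Rmeas_general {n : ℕ} (W Q U : Matrix (Fin n) (Fin n) ℝ)
    (hW : W.PosDef) (hQ : Q.PosDef) :
    0 ≤ Tmeas W Q U ∧ Tmeas W Q U ≤ Rmeas Q U := by
  unfold Tmeas Rmeas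
  set S := mySqrt W
  set T := mySqrt Q⁻¹
  have hSS : S * S = W := mySqrt_mul_self hW.posSemidef
  have hTT : T * T = Q⁻¹ := mySqrt_mul_self hQ.inv.posSemidef
  have hST : (S * T)ᵀ = T * S := by
    rw [transpose_mul, mySqrt_transpose hW.posSemidef, mySqrt_transpose hQ.inv.posSemidef]
  have hconj : S * Q⁻¹ * U * Q⁻¹ * S = S * T * (T * U * T) * (S * T)ᵀ := by
    simp only [hST, ← hTT, Matrix.mul_assoc]
  have htrace : (W * Q⁻¹).trace = (S * T * (S * T)ᵀ).trace := by
    rw [hST, ← hSS, ← hTT, trace_mul_comm]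
    simp only [Matrix.mul_assoc]
    rw [trace_mul_comm S]
    simp only [Matrix.mul_assoc]
  have hpos : 0 ≤ (W * Q⁻¹).trace :=
    htrace ▸ (posSemidef_self_mul_conjTranspose (S * T)).trace_nonneg
  refine ⟨div_nonneg (traceNorm_nonneg _) hpos, div_le_of_le_mul₀ hpos (opNorm_nonneg _) ?_⟩
  rw [hconj, htrace]
  exact traceNorm_mul_mul_transpose_le (S * T) (T * U * T)

/-- 0 ≤ T[W] ≤ R for positive definite W, Q and antisymmetric U. -/
theorem Tmeas_nonneg_le_Rmeas {n : ℕ} (W Q U : Matrix (Fin n) (Fin n) ℝ)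
    (hW : W.PosDef) (hQ : Q.PosDef) (hU : Uᵀ = -U) :
    0 ≤ Tmeas W Q U ∧ Tmeas W Q U ≤ Rmeas Q U :=
  Tmeas_nonneg_le_Rmeas_general W Q U hW hQ
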